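/- For any edge (u,v) of a locally finite graph, the Ollivier–Ricci curvature satisfies the lower bound Ric_O(u,v) ≥ -2(1 - 1/deg(u) - 1/deg(v))₊, where x₊ = max(x, 0). -/

import Mathlib

/-!
Write `a = deg u`, `b = deg v`. A neighbour `x` of `u` and a neighbour `y` of `v` are at distance
at most `3` (through the edge `uv`), and at distance `1` if `x = v` or `y = u`. So it suffices to
transport `m_u` to `m_v` moving as little mass as possible between `N(u) \ {v}` and `N(v) \ {u}`:
keep `(1/a + 1/b - 1)₊` on the pair `(v, u)`, send the rest of `m_u(v)` into `N(v) \ {u}` and the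
rest of `m_v(u)` out of `N(u) \ {v}`, and spread the remaining mass `(1 - 1/a - 1/b)₊` uniformly
over `(N(u) \ {v}) × (N(v) \ {u})`. Only this last block costs up to `3` instead of `1`, so
`W₁(m_u, m_v) ≤ 1 + 2 (1 - 1/a - 1/b)₊`.
-/

/-- The uniform probability measure on a finite set, as a function. -/
noncomputable def uniformOn {V : Type*} [DecidableEq V] (s : Finset V) : V → ℝ :=
  fun x => if x ∈ s then (s.card : ℝ)⁻¹ else 0

/-- The Wasserstein-1 distance between finitely supported measures `μ`, `ν` on the
vertices of a graph `G`, with the graph distance as transport cost. -/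
noncomputable def W1 {V : Type*} (G : SimpleGraph V) (μ ν : V → ℝ) : ℝ :=
  sInf {c : ℝ | ∃ π : V → V → ℝ,
    (∀ x y, 0 ≤ π x y) ∧
    (∀ x, ∑ᶠ y, π x y = μ x) ∧
    (∀ y, ∑ᶠ x, π x y = ν y) ∧
    c = ∑ᶠ x, ∑ᶠ y, π x y * (G.dist x y)}

/-- The Ollivier–Ricci curvature of a pair of vertices:
`Ric_O(u,v) = 1 - W₁(m_u, m_v)` where `m_x` is uniform on the neighbors of `x`. -/
noncomputable def ricO {V : Type*} [DecidableEq V] (G : SimpleGraph V)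
    [∀ v, Fintype (G.neighborSet v)] (u v : V) : ℝ :=
  1 - W1 G (uniformOn (G.neighborFinset u)) (uniformOn (G.neighborFinset v))

open Finset

theorem Finset.sum_ite_eq_add_mul {α R : Type*} [DecidableEq α] [Ring R] {s : Finset α} {w : α}
    (hw : w ∈ s) (c d : R) :
    ∑ y ∈ s, (if y = w then c else d) = c + (#s - 1 : R) * d := by
  rw [← add_sum_erase s _ hw, if_pos rfl, sum_congr rfl fun y hy => if_neg (ne_of_mem_erase hy),
    sum_const, card_erase_of_mem hw, nsmul_eq_mul,
    Nat.cast_sub (card_pos.mpr ⟨w, hw⟩), Nat.cast_one]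

section UniformOn

variable {V : Type*} [DecidableEq V] {s : Finset V} {x : V}

theorem uniformOn_of_mem (hx : x ∈ s) : uniformOn s x = 1 / #s := by
  simp [uniformOn, hx]

theorem uniformOn_of_not_mem (hx : x ∉ s) : uniformOn s x = 0 := by
  simp [uniformOn, hx]

theorem sum_uniformOn (hs : s.Nonempty) : ∑ x ∈ s, uniformOn s x = 1 := by
  rw [sum_congr rfl fun x => uniformOn_of_mem, sum_const, nsmul_eq_mul, mul_one_div_cancel]
  exact_mod_cast hs.card_pos.ne'

end UniformOn

theorem W1_le_sum_of_coupling {V : Type*} (G : SimpleGraph V) {μ ν : V → ℝ} {s t : Finset V}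
    (π : V → V → ℝ) (hπ : ∀ x y, 0 ≤ π x y) (hsupp : ∀ x y, ¬(x ∈ s ∧ y ∈ t) → π x y = 0)
    (hμ : ∀ x, ∑ y ∈ t, π x y = μ x) (hν : ∀ y, ∑ x ∈ s, π x y = ν y) :
    W1 G μ ν ≤ ∑ x ∈ s, ∑ y ∈ t, π x y * G.dist x y := by
  have hrow : ∀ x, (Function.support (π x)) ⊆ t := fun x y hy =>
    by_contra fun hyt => hy (hsupp x y fun h => hyt h.2)
  have hcol : ∀ y, (Function.support (π · y)) ⊆ s := fun y x hx =>
    by_contra fun hxs => hx (hsupp x y fun h => hxs h.1)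
  have hcost : ∑ᶠ x, ∑ᶠ y, π x y * G.dist x y = ∑ x ∈ s, ∑ y ∈ t, π x y * G.dist x y := by
    have hinner : ∀ x, ∑ᶠ y, π x y * G.dist x y = ∑ y ∈ t, π x y * G.dist x y := fun x =>
      finsum_eq_sum_of_support_subset _ fun y hy => hrow x (left_ne_zero_of_mul hy)
    rw [finsum_congr hinner]
    refine finsum_eq_sum_of_support_subset _ fun x hx => by_contra fun hxs => hx ?_
    exact sum_eq_zero fun y _ => by rw [hsupp x y fun h => hxs h.1, zero_mul]
  refine hcost ▸ csInf_le ⟨0, ?_⟩ ⟨π, hπ, fun x => ?_, fun y => ?_, rfl⟩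
  · rintro c ⟨π', hπ', -, -, rfl⟩
    exact finsum_nonneg fun x => finsum_nonneg fun y => mul_nonneg (hπ' x y) (Nat.cast_nonneg _)
  · rw [finsum_eq_sum_of_support_subset _ (hrow x), hμ]
  · rw [finsum_eq_sum_of_support_subset _ (hcol y), hν]

section Masses

variable (a b : ℝ)

noncomputable def edgeMass : ℝ := max (1 / a + 1 / b - 1) 0

noncomputable def farMass : ℝ := max (1 - 1 / a - 1 / b) 0

theorem edgeMass_comm : edgeMass a b = edgeMass b a := by
  rw [edgeMass, edgeMass, add_comm (1 / a)]

theorem farMass_comm : farMass a b = farMass b a := by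
  rw [farMass, farMass, sub_right_comm]

theorem farMass_sub_edgeMass : farMass a b - edgeMass a b = 1 - 1 / a - 1 / b := by
  have : -(1 - 1 / a - 1 / b) = 1 / a + 1 / b - 1 := by ring
  rw [farMass, edgeMass, ← this, max_zero_sub_max_neg_zero_eq_self]

variable {a b}

theorem edgeMass_le_one_div (ha : 0 ≤ a) (hb : 1 ≤ b) : edgeMass a b ≤ 1 / a := by
  have : 1 / b ≤ 1 := by rw [div_le_one (by linarith)]; exact hb
  exact max_le (by linarith) (by positivity)

theorem edgeMass_of_right_eq_one (ha : 0 ≤ a) (hb : b = 1) : edgeMass a b = 1 / a := by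
  rw [edgeMass, hb]
  simp only [div_one, add_sub_cancel_right]
  exact max_eq_left (by positivity)

theorem farMass_of_right_eq_one (ha : 0 ≤ a) (hb : b = 1) : farMass a b = 0 := by
  rw [farMass, hb]
  simp only [div_one, sub_sub_cancel_left]
  exact max_eq_right (by simp; positivity)

end Masses

section JostLiuPlan

variable {V : Type*} [DecidableEq V] (A B : Finset V) (v u : V)

/- When `#A = 1` or `#B = 1` some denominators below vanish; so do the matching numerators
(`edgeMass_of_right_eq_one`, `farMass_of_right_eq_one`), which spares all case splits on degrees. -/
noncomputable def jostLiuPlan (x y : V) : ℝ :=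
  if x ∈ A ∧ y ∈ B then
    if x = v then
      if y = u then edgeMass #A #B else (1 / #A - edgeMass #A #B) / (#B - 1)
    else
      if y = u then (1 / #B - edgeMass #A #B) / (#A - 1)
      else farMass #A #B / ((#A - 1) * (#B - 1))
  else 0

variable {A B v u}

theorem jostLiuPlan_of_not_mem {x y : V} (h : ¬(x ∈ A ∧ y ∈ B)) : jostLiuPlan A B v u x y = 0 :=
  if_neg h

theorem jostLiuPlan_nonneg (x y : V) : 0 ≤ jostLiuPlan A B v u x y := by
  by_cases hxy : x ∈ A ∧ y ∈ B
  · have hA : (1 : ℝ) ≤ #A := by exact_mod_cast card_pos.mpr ⟨x, hxy.1⟩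
    have hB : (1 : ℝ) ≤ #B := by exact_mod_cast card_pos.mpr ⟨y, hxy.2⟩
    rw [jostLiuPlan, if_pos hxy]
    split_ifs
    · exact le_max_right _ _
    · exact div_nonneg (sub_nonneg.2 (edgeMass_le_one_div (by positivity) hB)) (by linarith)
    · rw [edgeMass_comm]
      exact div_nonneg (sub_nonneg.2 (edgeMass_le_one_div (by positivity) hA)) (by linarith)
    · exact div_nonneg (le_max_right _ _) (mul_nonneg (by linarith) (by linarith))
  · exact (jostLiuPlan_of_not_mem hxy).ge

theorem jostLiuPlan_comm (x y : V) : jostLiuPlan B A u v y x = jostLiuPlan A B v u x y := by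
  unfold jostLiuPlan
  rw [edgeMass_comm, farMass_comm, mul_comm (_ - 1)]
  by_cases hx : x = v <;> by_cases hy : y = u <;> simp [hx, hy, and_comm]

theorem sum_jostLiuPlan_right (hv : v ∈ A) (hu : u ∈ B) (x : V) :
    ∑ y ∈ B, jostLiuPlan A B v u x y = uniformOn A x := by
  by_cases hx : x ∈ A
  · have hA : (0 : ℝ) ≤ #A := by positivity
    unfold jostLiuPlan
    rw [uniformOn_of_mem hx, sum_congr rfl fun y hy => if_pos ⟨hx, hy⟩]
    split_ifs with hxv
    · rw [sum_ite_eq_add_mul hu, mul_div_cancel_of_imp' fun hB => ?_, add_sub_cancel]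
      rw [sub_eq_zero, edgeMass_of_right_eq_one hA (sub_eq_zero.1 hB)]
    · have hA2 : (2 : ℝ) ≤ #A := by exact_mod_cast one_lt_card.mpr ⟨x, hx, v, hv, hxv⟩
      rw [sum_ite_eq_add_mul hu, ← div_div, mul_div_cancel_of_imp' fun hB => ?_, ← add_div,
        div_eq_iff (by linarith)]
      · have : 1 / (#A : ℝ) * (#A - 1) = 1 - 1 / #A := by field_simp
        linarith [farMass_sub_edgeMass (#A : ℝ) #B]
      · rw [farMass_of_right_eq_one hA (sub_eq_zero.1 hB), zero_div]
  · rw [uniformOn_of_not_mem hx]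
    exact sum_eq_zero fun y _ => jostLiuPlan_of_not_mem fun h => hx h.1

theorem sum_jostLiuPlan_left (hv : v ∈ A) (hu : u ∈ B) (y : V) :
    ∑ x ∈ A, jostLiuPlan A B v u x y = uniformOn B y := by
  simpa only [jostLiuPlan_comm] using sum_jostLiuPlan_right hu hv y

theorem sum_jostLiuPlan_mul_le (hv : v ∈ A) (hu : u ∈ B) {c : V → V → ℝ}
    (hcv : ∀ y ∈ B, c v y ≤ 1) (hcu : ∀ x ∈ A, c x u ≤ 1) (hc : ∀ x ∈ A, ∀ y ∈ B, c x y ≤ 3) :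
    ∑ x ∈ A, ∑ y ∈ B, jostLiuPlan A B v u x y * c x y ≤ 1 + 2 * farMass #A #B := by
  set k : ℝ := farMass #A #B / ((#A - 1) * (#B - 1)) with hk
  have hterm : ∀ x ∈ A, ∀ y ∈ B, jostLiuPlan A B v u x y * c x y ≤
      jostLiuPlan A B v u x y + 2 * (if x = v then 0 else if y = u then 0 else k) := by
    intro x hx y hy
    have hπ := jostLiuPlan_nonneg (A := A) (B := B) (v := v) (u := u) x y
    split_ifs with hxv hyu
    · subst hxv
      nlinarith [hcv y hy]
    · subst hyu
      nlinarith [hcu x hx]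
    · have : jostLiuPlan A B v u x y = k := by simp [jostLiuPlan, hx, hy, hxv, hyu, hk]
      nlinarith [hc x hx y hy]
  have hfar : ((#A : ℝ) - 1) * ((#B - 1) * k) = farMass #A #B := by
    rw [← mul_assoc, mul_div_cancel_of_imp']
    intro h
    rcases mul_eq_zero.1 h with hA | hB
    · rw [farMass_comm, farMass_of_right_eq_one (by positivity) (sub_eq_zero.1 hA)]
    · rw [farMass_of_right_eq_one (by positivity) (sub_eq_zero.1 hB)]
  calc ∑ x ∈ A, ∑ y ∈ B, jostLiuPlan A B v u x y * c x y
      ≤ ∑ x ∈ A, ∑ y ∈ B,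
          (jostLiuPlan A B v u x y + 2 * (if x = v then 0 else if y = u then 0 else k)) :=
        sum_le_sum fun x hx => sum_le_sum fun y hy => hterm x hx y hy
    _ = ∑ x ∈ A, uniformOn A x + 2 * ∑ x ∈ A, (if x = v then 0 else (#B - 1 : ℝ) * k) := by
        simp only [sum_add_distrib, ← mul_sum, sum_jostLiuPlan_right hv hu]
        congr 2
        refine sum_congr rfl fun x _ => ?_
        split_ifs
        · exact sum_const_zero
        · rw [sum_ite_eq_add_mul hu, zero_add]
    _ = 1 + 2 * farMass #A #B := by
        rw [sum_uniformOn ⟨v, hv⟩, sum_ite_eq_add_mul hv, zero_add, hfar]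

end JostLiuPlan

theorem SimpleGraph.dist_le_three_of_adj {V : Type*} {G : SimpleGraph V} {x u v y : V}
    (hxu : G.Adj x u) (huv : G.Adj u v) (hvy : G.Adj v y) : G.dist x y ≤ 3 :=
  G.dist_le (.cons hxu (.cons huv (.cons hvy .nil)))

theorem W1_uniformOn_neighborFinset_le {V : Type*} [DecidableEq V] (G : SimpleGraph V)
    [∀ v, Fintype (G.neighborSet v)] {u v : V} (h : G.Adj u v) :
    W1 G (uniformOn (G.neighborFinset u)) (uniformOn (G.neighborFinset v)) ≤
      1 + 2 * farMass (G.degree u) (G.degree v) := by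
  have hv : v ∈ G.neighborFinset u := (G.mem_neighborFinset u v).2 h
  have hu : u ∈ G.neighborFinset v := (G.mem_neighborFinset v u).2 h.symm
  refine (W1_le_sum_of_coupling G _ jostLiuPlan_nonneg (fun _ _ => jostLiuPlan_of_not_mem)
    (sum_jostLiuPlan_right hv hu) (sum_jostLiuPlan_left hv hu)).trans
    (sum_jostLiuPlan_mul_le hv hu (fun y hy => ?_) (fun x hx => ?_) (fun x hx y hy => ?_))
  · exact_mod_cast (G.dist_eq_one_iff_adj.2 ((G.mem_neighborFinset v y).1 hy)).le
  · exact_mod_cast (G.dist_eq_one_iff_adj.2 ((G.mem_neighborFinset u x).1 hx).symm).le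
  · exact_mod_cast G.dist_le_three_of_adj ((G.mem_neighborFinset u x).1 hx).symm h
      ((G.mem_neighborFinset v y).1 hy)

/-- Jost–Liu lower bound: for any edge `(u,v)` of a locally finite graph,
`Ric_O(u,v) ≥ -2(1 - 1/deg(u) - 1/deg(v))₊`. -/
theorem ricO_jost_liu_lower {V : Type*} [DecidableEq V]
    (G : SimpleGraph V) [∀ v, Fintype (G.neighborSet v)]
    (u v : V) (h : G.Adj u v) :
    -2 * max (1 - 1 / (G.degree u : ℝ) - 1 / (G.degree v : ℝ)) 0 ≤ ricO G u v := by
  have hW := W1_uniformOn_neighborFinset_le G h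
  rw [farMass] at hW
  rw [ricO]
  linarith
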